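/- arXiv:2401.12067 — 2 statements merged into one kernel-verified Lean document; each statement's English description precedes it below -/
import Mathlib

section
/- Let N be a free-choice net with no isolated places, S a nonempty siphon, Q the maximal trap in S, and M₀ a marking with M₀|Q = 0. Then no transition in post(S) is live at M₀; in particular, since post(S) ≠ ∅, not all transitions are live at M₀. -/
/-!
Let `Q` be the maximal trap of the siphon `S` and `R = S \ Q`. For every nonempty `X ⊆ R` the set
`X ∪ Q` lies in `S` but not in `Q`, so it is not a trap: some transition consumes from a place
`p ∈ X` and produces nothing into `X ∪ Q`. Peeling off such places one at a time ranks `R` and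
yields weights `w` on `R` together with, for each `p ∈ R`, a transition `u p` that consumes from
`p`, produces nothing into `Q`, and puts less than `w p` of weight back into `R`.

Suppose `t ∈ post(S)` were live at a marking `M` with `Q` unmarked. Before the first firing of a
transition of `post(S)` on a path to a marking enabling `t`, the siphon keeps the marking of `S`;
the transition `v` fired then consumes from a marked place `p`, which lies in `R`. By free choice
`u p` is enabled instead, and firing it keeps `Q` unmarked while strictly decreasing the potential
`∑ q ∈ R, w q * M q`. Liveness persists along reachable markings, so this descent cannot go on
forever.
-/

open Classical

/-- A net: flow from places to transitions (`Fpt`) and transitions to places (`Ftp`). -/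
structure Net (P T : Type) where
  Fpt : P → T → Prop
  Ftp : T → P → Prop

namespace Net

variable {P T : Type}

/-- Input places of a transition. -/
def preT (N : Net P T) (t : T) : Set P := {p | N.Fpt p t}
/-- Output places of a transition. -/
def postT (N : Net P T) (t : T) : Set P := {p | N.Ftp t p}
/-- Transitions producing into a set of places. -/
def preS (N : Net P T) (S : Set P) : Set T := {t | ∃ p ∈ S, N.Ftp t p}
/-- Transitions consuming from a set of places. -/
def postS (N : Net P T) (S : Set P) : Set T := {t | ∃ p ∈ S, N.Fpt p t}
/-- A trap: every transition consuming from `Q` produces into `Q`. -/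
def isTrap (N : Net P T) (Q : Set P) : Prop := N.postS Q ⊆ N.preS Q
/-- A siphon: every transition producing into `S` consumes from `S`. -/
def isSiphon (N : Net P T) (S : Set P) : Prop := N.preS S ⊆ N.postS S
/-- The maximal trap contained in `S`: union of all traps inside `S`. -/
def maxTrap (N : Net P T) (S : Set P) : Set P := ⋃₀ {Q | N.isTrap Q ∧ Q ⊆ S}
/-- Free choice: input-sharing transitions have equal presets. -/
def freeChoice (N : Net P T) : Prop :=
  ∀ t t' : T, (N.preT t ∩ N.preT t').Nonempty → N.preT t = N.preT t'
/-- `t` is enabled at marking `M`. -/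
def enabled (N : Net P T) (t : T) (M : P → ℕ) : Prop := ∀ p ∈ N.preT t, 1 ≤ M p
/-- Firing `t` at `M` yields `M'`. -/
def fires (N : Net P T) (t : T) (M M' : P → ℕ) : Prop :=
  N.enabled t M ∧
    ∀ p, M' p = M p - (if p ∈ N.preT t then 1 else 0) + (if p ∈ N.postT t then 1 else 0)
/-- Reachability: reflexive-transitive closure of single firings. -/
def reach (N : Net P T) : (P → ℕ) → (P → ℕ) → Prop :=
  Relation.ReflTransGen (fun M M' => ∃ t, N.fires t M M')
/-- Firing a whole sequence of transitions. -/
def firesList (N : Net P T) : List T → (P → ℕ) → (P → ℕ) → Prop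
  | [], M, M' => M' = M
  | t :: σ, M, M' => ∃ M₁, N.fires t M M₁ ∧ N.firesList σ M₁ M'
/-- `t` is dead at `M`: no reachable marking enables it. -/
def dead (N : Net P T) (t : T) (M : P → ℕ) : Prop :=
  ∀ M', N.reach M M' → ¬ N.enabled t M'
/-- `t` is live at `M`: it is dead at no reachable marking. -/
def live (N : Net P T) (t : T) (M : P → ℕ) : Prop :=
  ∀ M', N.reach M M' → ¬ N.dead t M'

end Net

theorem Finset.exists_weight_sum_lt_of_forall_exists_disjoint {α β : Type*}
    (good : α → β → Prop) (out : β → Set α) (X : Finset α)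
    (h : ∀ Y ⊆ X, Y.Nonempty → ∃ p ∈ Y, ∃ b, good p b ∧ Disjoint (out b) ↑Y) :
    ∃ w : α → ℕ, ∀ p ∈ X, ∃ b, good p b ∧ ∑ q ∈ X with q ∈ out b, w q < w p := by
  induction X using Finset.strongInduction with
  | _ X ih =>
    rcases X.eq_empty_or_nonempty with rfl | hne
    · exact ⟨0, by simp⟩
    obtain ⟨p, hpX, b₀, hgood₀, hdisj₀⟩ := h X subset_rfl hne
    obtain ⟨w', hw'⟩ := ih (X.erase p) (Finset.erase_ssubset hpX)
      fun Y hY => h Y (hY.trans (Finset.erase_subset p X))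
    -- `p` is ranked below everything else, so its weight 1 is outweighed by each doubled weight
    refine ⟨fun q => if q = p then 1 else 2 * w' q, fun q hqX => ?_⟩
    by_cases hqp : q = p
    · subst hqp
      refine ⟨b₀, hgood₀, ?_⟩
      have : (X.filter (· ∈ out b₀)) = ∅ :=
        Finset.filter_eq_empty_iff.mpr fun r hr hrout => hdisj₀.notMem_of_mem_left hrout hr
      simp [this]
    obtain ⟨b, hgood, hlt⟩ := hw' q (Finset.mem_erase.mpr ⟨hqp, hqX⟩)
    refine ⟨b, hgood, ?_⟩
    have hsplit : ∑ r ∈ X with r ∈ out b, (if r = p then 1 else 2 * w' r)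
        ≤ 1 + 2 * ∑ r ∈ X.erase p with r ∈ out b, w' r := by
      rw [Finset.sum_filter, Finset.sum_filter, ← Finset.add_sum_erase X _ hpX, Finset.mul_sum]
      gcongr with r hr
      · rw [if_pos rfl]
        split_ifs <;> omega
      · rw [if_neg (Finset.ne_of_mem_erase hr)]
        split_ifs <;> omega
    simp only [if_neg hqp]
    omega

namespace Net

variable {P T : Type} {N : Net P T}

section Traps

variable {S A : Set P}

theorem maxTrap_subset : N.maxTrap S ⊆ S := by
  rintro p ⟨Q, ⟨-, hQS⟩, hp⟩
  exact hQS hp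

theorem maxTrap_isTrap : N.isTrap (N.maxTrap S) := by
  rintro t ⟨p, ⟨Q, hQ, hpQ⟩, hpt⟩
  obtain ⟨q, hq, htq⟩ := hQ.1 ⟨p, hpQ, hpt⟩
  exact ⟨q, ⟨Q, hQ, hq⟩, htq⟩

theorem subset_maxTrap (hA : N.isTrap A) (hAS : A ⊆ S) : A ⊆ N.maxTrap S :=
  Set.subset_sUnion_of_mem ⟨hA, hAS⟩

theorem exists_preT_disjoint_of_subset_sdiff_maxTrap {X : Set P}
    (hX : X ⊆ S \ N.maxTrap S) (hne : X.Nonempty) :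
    ∃ p ∈ X, ∃ v, p ∈ N.preT v ∧ Disjoint (N.postT v) (X ∪ N.maxTrap S) := by
  have hnotTrap : ¬ N.isTrap (X ∪ N.maxTrap S) := fun htrap => by
    obtain ⟨p, hp⟩ := hne
    have hsub : X ∪ N.maxTrap S ⊆ S := Set.union_subset (fun q hq => (hX hq).1) maxTrap_subset
    exact (hX hp).2 (subset_maxTrap htrap hsub (Or.inl hp))
  obtain ⟨v, ⟨p, hp, hpv⟩, hvout⟩ := Set.not_subset.mp hnotTrap
  have hdisj : Disjoint (N.postT v) (X ∪ N.maxTrap S) :=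
    Set.disjoint_right.mpr fun q hq hvq => hvout ⟨q, hq, hvq⟩
  rcases hp with hpX | hpQ
  · exact ⟨p, hpX, v, hpv, hdisj⟩
  · obtain ⟨q, hq, hvq⟩ := maxTrap_isTrap ⟨p, hpQ, hpv⟩
    exact absurd (Or.inr hq) (Set.disjoint_left.mp hdisj hvq)

end Traps

variable {t : T} {M M' : P → ℕ}

theorem fires.add_indicator_eq (h : N.fires t M M') (q : P) :
    M' q + (if q ∈ N.preT t then 1 else 0) = M q + (if q ∈ N.postT t then 1 else 0) := by
  have hq := h.2 q
  by_cases hpre : q ∈ N.preT t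
  · have := h.1 q hpre
    simp only [hpre, if_true] at hq ⊢
    omega
  · simp only [hpre, if_false] at hq ⊢
    omega

theorem fires.eqOn_of_notMem_postS {S : Set P} (hS : N.isSiphon S) (h : N.fires t M M')
    (ht : t ∉ N.postS S) : Set.EqOn M' M S := by
  intro q hq
  have hpre : q ∉ N.preT t := fun hqt => ht ⟨q, hq, hqt⟩
  have hpost : q ∉ N.postT t := fun htq => ht (hS ⟨q, hq, htq⟩)
  simpa [hpre, hpost] using h.add_indicator_eq q

theorem fires.eq_zero_of_disjoint {A : Set P} (h : N.fires t M M') (hA : Disjoint (N.postT t) A)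
    (hM : ∀ q ∈ A, M q = 0) : ∀ q ∈ A, M' q = 0 := by
  intro q hq
  have := h.add_indicator_eq q
  rw [if_neg (Set.disjoint_right.mp hA hq), hM q hq] at this
  omega

theorem exists_fires (h : N.enabled t M) : ∃ M', N.fires t M M' :=
  ⟨_, h, fun _ => rfl⟩

theorem enabled_of_freeChoice (hfc : N.freeChoice) {u : T} {p : P} (hv : p ∈ N.preT t)
    (hu : p ∈ N.preT u) (h : N.enabled t M) : N.enabled u M := by
  rwa [enabled, ← hfc t u ⟨p, hv, hu⟩]

section Potential

variable (R : Finset P) (w : P → ℕ)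

theorem fires.sum_mul_add_eq (h : N.fires t M M') :
    ∑ q ∈ R, w q * M' q + ∑ q ∈ R with q ∈ N.preT t, w q
      = ∑ q ∈ R, w q * M q + ∑ q ∈ R with q ∈ N.postT t, w q := by
  simp only [Finset.sum_filter, ← Finset.sum_add_distrib]
  refine Finset.sum_congr rfl fun q _ => ?_
  have := congrArg (w q * ·) (h.add_indicator_eq q)
  simpa only [mul_add, mul_ite, mul_one, mul_zero] using this

theorem fires.sum_mul_lt {p : P} (h : N.fires t M M') (hpR : p ∈ R) (hpt : p ∈ N.preT t)
    (hw : ∑ q ∈ R with q ∈ N.postT t, w q < w p) :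
    ∑ q ∈ R, w q * M' q < ∑ q ∈ R, w q * M q := by
  have hp : w p ≤ ∑ q ∈ R with q ∈ N.preT t, w q :=
    Finset.single_le_sum (fun _ _ => Nat.zero_le _) (Finset.mem_filter.mpr ⟨hpR, hpt⟩)
  have := h.sum_mul_add_eq R w
  omega

end Potential

theorem live.exists_reach_enabled (h : N.live t M) : ∃ M', N.reach M M' ∧ N.enabled t M' := by
  by_contra! hdead
  exact h M Relation.ReflTransGen.refl hdead

theorem live.of_reach (h : N.live t M) (hM : N.reach M M') : N.live t M' :=
  fun M'' hM' => h M'' (hM.trans hM')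

theorem not_live_of_forall_exists_reach_lt (Φ : (P → ℕ) → ℕ) (C : (P → ℕ) → Prop)
    (hdesc : ∀ M, C M → N.live t M → ∃ M', N.reach M M' ∧ C M' ∧ Φ M' < Φ M) :
    ∀ M, C M → ¬ N.live t M := by
  intro M
  induction hΦ : Φ M using Nat.strong_induction_on generalizing M with
  | _ n ih =>
    intro hC hlive
    obtain ⟨M', hreach, hC', hlt⟩ := hdesc M hC hlive
    exact ih _ (hΦ ▸ hlt) M' rfl hC' (hlive.of_reach hreach)

theorem reach.exists_enabled_postS {S : Set P} (hS : N.isSiphon S) (hM : N.reach M M')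
    (ht : t ∈ N.postS S) (hen : N.enabled t M') :
    ∃ M₂, N.reach M M₂ ∧ Set.EqOn M₂ M S ∧ ∃ v ∈ N.postS S, N.enabled v M₂ := by
  induction hM using Relation.ReflTransGen.head_induction_on with
  | refl => exact ⟨M', .refl, fun _ _ => rfl, t, ht, hen⟩
  | head hstep _ ih =>
    obtain ⟨v, hfires⟩ := hstep
    by_cases hv : v ∈ N.postS S
    · exact ⟨_, .refl, fun _ _ => rfl, v, hv, hfires.1⟩
    · obtain ⟨M₂, hreach, heq, rest⟩ := ih
      exact ⟨M₂, .head ⟨v, hfires⟩ hreach, heq.trans (hfires.eqOn_of_notMem_postS hS hv), rest⟩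

theorem not_live_of_maxTrap_unmarked [Finite P] (hfc : N.freeChoice) {S : Set P}
    (hS : N.isSiphon S) (ht : t ∈ N.postS S) (hM : ∀ p ∈ N.maxTrap S, M p = 0) : ¬ N.live t M := by
  set R := (Set.toFinite (S \ N.maxTrap S)).toFinset
  obtain ⟨w, hw⟩ := R.exists_weight_sum_lt_of_forall_exists_disjoint
    (fun p v => p ∈ N.preT v ∧ Disjoint (N.postT v) (N.maxTrap S)) N.postT
    fun Y hY hne => by
      obtain ⟨p, hp, v, hpv, hdisj⟩ := exists_preT_disjoint_of_subset_sdiff_maxTrap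
        (fun q hq => (Set.Finite.mem_toFinset _).mp (hY hq)) (Finset.coe_nonempty.mpr hne)
      rw [Set.disjoint_union_right] at hdisj
      exact ⟨p, hp, v, ⟨hpv, hdisj.2⟩, hdisj.1⟩
  refine not_live_of_forall_exists_reach_lt (fun M => ∑ q ∈ R, w q * M q)
    (fun M => ∀ p ∈ N.maxTrap S, M p = 0) (fun M hM hlive => ?_) M hM
  obtain ⟨M₁, hreach₁, hen₁⟩ := hlive.exists_reach_enabled
  obtain ⟨M₂, hreach₂, heq, v, ⟨p, hpS, hpv⟩, hen₂⟩ := hreach₁.exists_enabled_postS hS ht hen₁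
  have hpR : p ∈ R := by
    refine (Set.Finite.mem_toFinset _).mpr ⟨hpS, fun hpQ => ?_⟩
    have := hen₂ p hpv
    rw [heq hpS, hM p hpQ] at this
    exact Nat.not_succ_le_zero 0 this
  obtain ⟨u, ⟨hpu, hdisj⟩, hlt⟩ := hw p hpR
  obtain ⟨M₃, hfires⟩ := exists_fires (enabled_of_freeChoice hfc hpv hpu hen₂)
  refine ⟨M₃, hreach₂.tail ⟨u, hfires⟩,
    hfires.eq_zero_of_disjoint hdisj fun q hq => (heq (maxTrap_subset hq)).trans (hM q hq), ?_⟩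
  calc ∑ q ∈ R, w q * M₃ q < ∑ q ∈ R, w q * M₂ q := hfires.sum_mul_lt R w hpR hpu hlt
    _ = ∑ q ∈ R, w q * M q :=
      Finset.sum_congr rfl fun q hq => by rw [heq ((Set.Finite.mem_toFinset _).mp hq).1]

end Net

theorem commoner_hard_direction_general {P T : Type} [Fintype P]
    (N : Net P T) (hfc : N.freeChoice)
    (hiso : ∀ p : P, ∃ t : T, p ∈ N.preT t ∨ p ∈ N.postT t)
    (S : Set P) (hSne : S.Nonempty) (hS : N.isSiphon S)
    (M₀ : P → ℕ) (hM₀ : ∀ p ∈ N.maxTrap S, M₀ p = 0) :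
    (∀ t ∈ N.postS S, ¬ N.live t M₀) ∧ ∃ t : T, ¬ N.live t M₀ := by
  have hnotLive : ∀ t ∈ N.postS S, ¬ N.live t M₀ := fun t ht =>
    Net.not_live_of_maxTrap_unmarked hfc hS ht hM₀
  obtain ⟨p, hp⟩ := hSne
  obtain ⟨t, hpt | htp⟩ := hiso p
  · exact ⟨hnotLive, t, hnotLive t ⟨p, hp, hpt⟩⟩
  · exact ⟨hnotLive, t, hnotLive t (hS ⟨p, hp, htp⟩)⟩

/-- hard direction of Commoner's theorem: if the maximal trap of a
nonempty siphon is unmarked, no transition consuming from the siphon is live. -/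
theorem commoner_hard_direction {P T : Type} [Fintype P] [Fintype T]
    (N : Net P T) (hfc : N.freeChoice)
    (hiso : ∀ p : P, ∃ t : T, p ∈ N.preT t ∨ p ∈ N.postT t)
    (S : Set P) (hSne : S.Nonempty) (hS : N.isSiphon S)
    (M₀ : P → ℕ) (hM₀ : ∀ p ∈ N.maxTrap S, M₀ p = 0) :
    (∀ t ∈ N.postS S, ¬ N.live t M₀) ∧ ∃ t : T, ¬ N.live t M₀ :=
  commoner_hard_direction_general N hfc hiso S hSne hS M₀ hM₀
end

section
/- (Commoner's theorem) For a free-choice net N = (P,T,F) with no isolated places and any marking M₀, all transitions are live at M₀ if and only if every nonempty siphon S ⊆ P contains a trap Q with M₀|Q ≠ 0. -/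
open Classical

/- ======================  Auxiliary development  ====================== -/

namespace Net

variable {P T : Type}

/-- The result of firing `t` at `M`. -/
noncomputable def fireM (N : Net P T) (t : T) (M : P → ℕ) : P → ℕ :=
  fun p => M p - (if p ∈ N.preT t then 1 else 0) + (if p ∈ N.postT t then 1 else 0)

lemma fires_fireM (N : Net P T) {t : T} {M : P → ℕ} (h : N.enabled t M) :
    N.fires t M (N.fireM t M) := ⟨h, fun _ => rfl⟩

lemma reach_single (N : Net P T) {M M' : P → ℕ} {t : T} (h : N.fires t M M') :
    N.reach M M' := Relation.ReflTransGen.single ⟨t, h⟩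

lemma dead_mono (N : Net P T) {t : T} {M M' : P → ℕ} (h : N.reach M M')
    (hd : N.dead t M) : N.dead t M' := fun M'' h'' => hd M'' (h.trans h'')

/-- A marked trap stays marked. -/
lemma trap_marked_mono (N : Net P T) {Q : Set P} (hQ : N.isTrap Q) {M M' : P → ℕ}
    (h : N.reach M M') (hm : ∃ p ∈ Q, 1 ≤ M p) : ∃ p ∈ Q, 1 ≤ M' p := by
  induction h with
  | refl => exact hm
  | tail _ hbc ih =>
    obtain ⟨t, ht, heq⟩ := hbc
    obtain ⟨p, hpQ, hp⟩ := ih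
    by_cases hpre : p ∈ N.preT t
    · obtain ⟨q, hqQ, hqt⟩ := hQ ⟨p, hpQ, hpre⟩
      refine ⟨q, hqQ, ?_⟩
      rw [heq q]
      have hq : q ∈ N.postT t := hqt
      by_cases hq' : q ∈ N.preT t <;> simp [hq, hq'] <;> omega
    · refine ⟨p, hpQ, ?_⟩
      rw [heq p]
      by_cases hq' : p ∈ N.postT t <;> simp [hpre, hq'] <;> omega

/-- An empty siphon stays empty. -/
lemma siphon_zero_mono (N : Net P T) {S : Set P} (hS : N.isSiphon S) {M M' : P → ℕ}
    (h : N.reach M M') (hz : ∀ p ∈ S, M p = 0) : ∀ p ∈ S, M' p = 0 := by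
  induction h with
  | refl => exact hz
  | tail _ hbc ih =>
    obtain ⟨t, ht, heq⟩ := hbc
    intro p hpS
    have hb := ih p hpS
    have hpost : p ∉ N.postT t := by
      intro hpost
      obtain ⟨q, hqS, hqt⟩ := hS ⟨p, hpS, hpost⟩
      have h1 := ht q hqt
      have h2 := ih q hqS
      omega
    rw [heq p]
    by_cases hpre : p ∈ N.preT t <;> simp [hpre, hpost] <;> omega

lemma maxTrap_subset_s13 (N : Net P T) (S : Set P) : N.maxTrap S ⊆ S := by
  rintro p ⟨Q, ⟨_, hQS⟩, hp⟩; exact hQS hp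

lemma isTrap_maxTrap (N : Net P T) (S : Set P) : N.isTrap (N.maxTrap S) := by
  rintro t ⟨p, ⟨Q, ⟨hQ, hQS⟩, hp⟩, hpt⟩
  obtain ⟨q, hq, hqt⟩ := hQ ⟨p, hp, hpt⟩
  exact ⟨q, ⟨Q, ⟨hQ, hQS⟩, hq⟩, hqt⟩

lemma subset_maxTrap_s13 (N : Net P T) {S Q : Set P} (hQ : N.isTrap Q) (hQS : Q ⊆ S) :
    Q ⊆ N.maxTrap S := fun p hp => ⟨Q, ⟨hQ, hQS⟩, hp⟩

/-- Iterated pruning of `S`: remove places with a consumer not producing back. -/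
def drainSet (N : Net P T) (S : Set P) : ℕ → Set P
  | 0 => S
  | i+1 => {p | p ∈ N.drainSet S i ∧ ∀ t, N.Fpt p t → (N.postT t ∩ N.drainSet S i).Nonempty}

lemma drainSet_succ_subset (N : Net P T) (S : Set P) (i : ℕ) :
    N.drainSet S (i+1) ⊆ N.drainSet S i := fun _ hp => hp.1

lemma drainSet_antitone (N : Net P T) (S : Set P) {i j : ℕ} (h : i ≤ j) :
    N.drainSet S j ⊆ N.drainSet S i := by
  induction h with
  | refl => exact subset_rfl
  | step _ ih => exact fun p hp => ih (N.drainSet_succ_subset S _ hp)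

lemma maxTrap_subset_drainSet (N : Net P T) (S : Set P) (i : ℕ) :
    N.maxTrap S ⊆ N.drainSet S i := by
  induction i with
  | zero => exact N.maxTrap_subset_s13 S
  | succ i ih =>
    intro p hp
    refine ⟨ih hp, ?_⟩
    intro t hpt
    obtain ⟨q, hq, hqt⟩ := N.isTrap_maxTrap S ⟨p, hp, hpt⟩
    exact ⟨q, hqt, ih hq⟩

lemma exists_drainSet_stable (N : Net P T) [Fintype P] (S : Set P) :
    ∃ n, N.drainSet S (n+1) = N.drainSet S n := by
  by_contra h
  push_neg at h
  have hlt : ∀ n, (N.drainSet S (n+1)).ncard < (N.drainSet S n).ncard := by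
    intro n
    exact Set.ncard_lt_ncard
      (HasSubset.Subset.ssubset_of_ne (N.drainSet_succ_subset S n) (h n)) (Set.toFinite _)
  have key : ∀ n, (N.drainSet S n).ncard + n ≤ (N.drainSet S 0).ncard := by
    intro n
    induction n with
    | zero => simp
    | succ n ih => have := hlt n; omega
  have := key ((N.drainSet S 0).ncard + 1)
  omega

lemma isTrap_of_stable (N : Net P T) {S : Set P} {n : ℕ}
    (h : N.drainSet S (n+1) = N.drainSet S n) : N.isTrap (N.drainSet S n) := by
  rintro t ⟨p, hp, hpt⟩
  rw [← h] at hp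
  obtain ⟨q, hqt, hq⟩ := hp.2 t hpt
  exact ⟨q, hq, hqt⟩

/-- Rank of a place in `S \ maxTrap S`. -/
noncomputable def rnk (N : Net P T) (S : Set P) (p : P) : ℕ :=
  sInf {i | p ∉ N.drainSet S (i+1)}

lemma rnk_spec (N : Net P T) [Fintype P] {S : Set P} {p : P}
    (hp : p ∈ S) (hq : p ∉ N.maxTrap S) :
    p ∈ N.drainSet S (N.rnk S p) ∧ p ∉ N.drainSet S (N.rnk S p + 1) := by
  have hne : {i | p ∉ N.drainSet S (i+1)}.Nonempty := by
    obtain ⟨n, hn⟩ := N.exists_drainSet_stable S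
    have htrap := N.isTrap_of_stable hn
    have hsub : N.drainSet S n ⊆ S := N.drainSet_antitone S (Nat.zero_le n)
    have hnot : p ∉ N.drainSet S n := fun hmem => hq (N.subset_maxTrap_s13 htrap hsub hmem)
    cases n with
    | zero => exact absurd hp hnot
    | succ m => exact ⟨m, hnot⟩
  have h2 : p ∉ N.drainSet S (N.rnk S p + 1) := Nat.sInf_mem hne
  refine ⟨?_, h2⟩
  rcases Nat.eq_zero_or_pos (N.rnk S p) with h0 | hpos
  · rw [h0]; exact hp
  · have hlt : N.rnk S p - 1 < N.rnk S p := by omega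
    have hm : N.rnk S p - 1 ∉ {i | p ∉ N.drainSet S (i+1)} := Nat.notMem_of_lt_sInf hlt
    have : p ∈ N.drainSet S (N.rnk S p - 1 + 1) := not_not.mp hm
    rwa [Nat.sub_add_cancel hpos] at this

lemma drain_exists (N : Net P T) [Fintype P] {S : Set P} {p : P}
    (hp : p ∈ S) (hq : p ∉ N.maxTrap S) :
    ∃ t, N.Fpt p t ∧ ∀ x, N.Ftp t x → x ∉ N.drainSet S (N.rnk S p) := by
  obtain ⟨hmem, hnot⟩ := N.rnk_spec hp hq
  by_contra h
  push_neg at h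
  apply hnot
  refine ⟨hmem, ?_⟩
  intro t hpt
  obtain ⟨x, hx1, hx2⟩ := h t hpt
  exact ⟨x, hx1, hx2⟩

/-- Token weight used in the descent measure. -/
noncomputable def wgt (N : Net P T) [Fintype P] (S : Set P) (p : P) : ℕ :=
  if p ∈ S ∧ p ∉ N.maxTrap S then (Fintype.card P + 1) ^ (N.rnk S p) else 0

/-- The descent measure. -/
noncomputable def mu (N : Net P T) [Fintype P] (S : Set P) (M : P → ℕ) : ℕ :=
  ∑ p, N.wgt S p * M p

lemma mu_congr (N : Net P T) [Fintype P] (S : Set P) {M M' : P → ℕ}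
    (h : ∀ p ∈ S, M' p = M p) : N.mu S M' = N.mu S M := by
  apply Finset.sum_congr rfl
  intro p _
  by_cases hp : p ∈ S ∧ p ∉ N.maxTrap S
  · rw [h p hp.1]
  · simp [wgt, hp]

lemma mu_pos (N : Net P T) [Fintype P] (S : Set P) {M : P → ℕ} {p : P}
    (hp : p ∈ S) (hq : p ∉ N.maxTrap S) (hm : 1 ≤ M p) : 1 ≤ N.mu S M := by
  have h1 : 1 ≤ N.wgt S p * M p := by
    have : N.wgt S p = (Fintype.card P + 1) ^ (N.rnk S p) := by simp [wgt, hp, hq]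
    rw [this]
    have h2 : 1 ≤ (Fintype.card P + 1) ^ (N.rnk S p) := Nat.one_le_pow _ _ (by omega)
    exact le_trans h2 (Nat.le_mul_of_pos_right _ hm)
  calc 1 ≤ N.wgt S p * M p := h1
    _ ≤ N.mu S M := Finset.single_le_sum (f := fun p => N.wgt S p * M p)
      (fun _ _ => Nat.zero_le _) (Finset.mem_univ p)

/-- Maximizer of a bounded function over reachable markings. -/
lemma exists_reach_max (N : Net P T) (f : (P → ℕ) → ℕ) (K : ℕ) (hb : ∀ M, f M ≤ K)
    (M : P → ℕ) : ∃ M₁, N.reach M M₁ ∧ ∀ M₂, N.reach M₁ M₂ → f M₂ ≤ f M₁ := by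
  set s : Set ℕ := {n | ∃ M', N.reach M M' ∧ f M' = n} with hs
  have hne : s.Nonempty := ⟨f M, M, Relation.ReflTransGen.refl, rfl⟩
  have hbdd : BddAbove s := ⟨K, by rintro n ⟨M', _, rfl⟩; exact hb M'⟩
  obtain ⟨M₁, hM₁, hf⟩ := Nat.sSup_mem hne hbdd
  refine ⟨M₁, hM₁, fun M₂ h₂ => ?_⟩
  rw [hf]
  exact le_csSup hbdd ⟨M₂, hM₁.trans h₂, rfl⟩


/-- Divert: if `t` is enabled and consumes a place of `S` outside the maximal trap,
firing a suitable free-choice sibling of `t` strictly decreases the measure while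
keeping the maximal trap empty. -/
lemma divert (N : Net P T) [Fintype P] (hfc : N.freeChoice) {S : Set P} {M : P → ℕ}
    {t : T} {q : P} (ht : N.enabled t M) (hqpre : q ∈ N.preT t) (hqS : q ∈ S)
    (hqQ : q ∉ N.maxTrap S) (hQE : ∀ p ∈ N.maxTrap S, M p = 0) :
    ∃ M', N.reach M M' ∧ (∀ p ∈ N.maxTrap S, M' p = 0) ∧ N.mu S M' < N.mu S M := by
  obtain ⟨t', hqt', hdr⟩ := N.drain_exists hqS hqQ
  have hpre_eq : N.preT t = N.preT t' := hfc t t' ⟨q, hqpre, hqt'⟩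
  have ht' : N.enabled t' M := fun p hp => ht p (hpre_eq ▸ hp)
  refine ⟨N.fireM t' M, N.reach_single (N.fires_fireM ht'), ?_, ?_⟩
  · intro p hp
    have h1 : M p = 0 := hQE p hp
    have h2 : p ∉ N.postT t' := fun hmem => hdr p hmem (N.maxTrap_subset_drainSet S _ hp)
    simp [fireM, h1, h2]
  · have key : N.mu S (N.fireM t' M) + ∑ p, N.wgt S p * (if p ∈ N.preT t' then 1 else 0)
        = N.mu S M + ∑ p, N.wgt S p * (if p ∈ N.postT t' then 1 else 0) := by
      simp only [mu]
      rw [← Finset.sum_add_distrib, ← Finset.sum_add_distrib]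
      apply Finset.sum_congr rfl
      intro p _
      rw [← Nat.mul_add, ← Nat.mul_add]
      congr 1
      simp only [fireM]
      by_cases hp : p ∈ N.preT t'
      · have := ht' p hp
        by_cases hp2 : p ∈ N.postT t' <;> simp [hp, hp2] <;> omega
      · by_cases hp2 : p ∈ N.postT t' <;> simp [hp, hp2]
    have hwq : N.wgt S q = (Fintype.card P + 1) ^ (N.rnk S q) := by simp [wgt, hqS, hqQ, ]
    have hA : (Fintype.card P + 1) ^ (N.rnk S q) ≤ ∑ p, N.wgt S p * (if p ∈ N.preT t' then 1 else 0) := by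
      have hq' : q ∈ N.preT t' := hqt'
      calc (Fintype.card P + 1) ^ (N.rnk S q) = N.wgt S q * (if q ∈ N.preT t' then 1 else 0) := by
            simp [hq', hwq]
        _ ≤ _ := Finset.single_le_sum
              (f := fun p => N.wgt S p * (if p ∈ N.preT t' then 1 else 0))
              (fun _ _ => Nat.zero_le _) (Finset.mem_univ q)
    have hBlt : ∑ p, N.wgt S p * (if p ∈ N.postT t' then 1 else 0) < (Fintype.card P + 1) ^ (N.rnk S q) := by
      rcases Nat.eq_zero_or_pos (N.rnk S q) with h0 | hpos
      · have hz : ∀ p ∈ Finset.univ, N.wgt S p * (if p ∈ N.postT t' then 1 else 0) = 0 := by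
          intro p _
          by_cases hpp : p ∈ N.postT t'
          · by_cases hpw : p ∈ S ∧ p ∉ N.maxTrap S
            · exfalso
              apply hdr p hpp
              rw [h0]
              exact hpw.1
            · simp [wgt, hpw]
          · simp [hpp]
        rw [Finset.sum_eq_zero hz]
        exact Nat.pow_pos (by omega)
      · have hterm : ∀ p ∈ Finset.univ, N.wgt S p * (if p ∈ N.postT t' then 1 else 0)
            ≤ (Fintype.card P + 1) ^ (N.rnk S q - 1) := by
          intro p _
          by_cases hpp : p ∈ N.postT t'
          · by_cases hpw : p ∈ S ∧ p ∉ N.maxTrap S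
            · have h1 : p ∉ N.drainSet S (N.rnk S q) := hdr p hpp
              have h2 : p ∈ N.drainSet S (N.rnk S p) := (N.rnk_spec hpw.1 hpw.2).1
              have h3 : N.rnk S p ≤ N.rnk S q - 1 := by
                by_contra hgt
                push_neg at hgt
                exact h1 (N.drainSet_antitone S (by omega) h2)
              have hw : N.wgt S p = (Fintype.card P + 1) ^ (N.rnk S p) := by simp [wgt, hpw.1, hpw.2, ]
              rw [hw]
              have := Nat.pow_le_pow_right (n := Fintype.card P + 1) (by omega) h3
              simpa [hpp] using this
            · simp [wgt, hpw]
          · simp [hpp]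
        calc ∑ p, N.wgt S p * (if p ∈ N.postT t' then 1 else 0)
            ≤ ∑ _p : P, (Fintype.card P + 1) ^ (N.rnk S q - 1) := Finset.sum_le_sum hterm
          _ = Fintype.card P * (Fintype.card P + 1) ^ (N.rnk S q - 1) := by
              simp [Finset.sum_const, Finset.card_univ, smul_eq_mul]
          _ < (Fintype.card P + 1) * (Fintype.card P + 1) ^ (N.rnk S q - 1) := by
              have h1 : 0 < (Fintype.card P + 1) ^ (N.rnk S q - 1) := Nat.pow_pos (by omega)
              exact (Nat.mul_lt_mul_right h1).mpr (by omega)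
          _ = (Fintype.card P + 1) ^ (N.rnk S q) := by
              rw [← pow_succ']
              congr 1
              omega
    omega

/-- Transitions not consuming from the siphon leave it untouched. -/
lemma frozen (N : Net P T) {S : Set P} (hS : N.isSiphon S) {M M' : P → ℕ} {t : T}
    (hf : N.fires t M M') (hdisj : ∀ p ∈ N.preT t, p ∉ S) : ∀ p ∈ S, M' p = M p := by
  intro p hpS
  have hpost : p ∉ N.postT t := by
    intro hp
    obtain ⟨y, hyS, hyt⟩ := hS ⟨p, hpS, hp⟩
    exact hdisj y hyt hyS
  have hpre : p ∉ N.preT t := fun hp => hdisj p hp hpS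
  rw [hf.2 p]; simp [hpre, hpost]

/-- Along any firing path from a marking with empty maximal trap, either we can divert
and strictly decrease the measure, or the siphon marking is frozen. -/
lemma lemA (N : Net P T) [Fintype P] (hfc : N.freeChoice) {S : Set P} (hS : N.isSiphon S)
    {M M'' : P → ℕ} (h : N.reach M M'') (hQE : ∀ p ∈ N.maxTrap S, M p = 0) :
    (∃ M₃, N.reach M M₃ ∧ (∀ p ∈ N.maxTrap S, M₃ p = 0) ∧ N.mu S M₃ < N.mu S M) ∨
    ((∀ p ∈ N.maxTrap S, M'' p = 0) ∧ ∀ p ∈ S, M'' p = M p) := by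
  revert hQE
  induction h using Relation.ReflTransGen.head_induction_on with
  | refl => exact fun hQE => Or.inr ⟨hQE, fun _ _ => rfl⟩
  | @head a c hstep htail ih =>
    intro hQE
    obtain ⟨t, hf⟩ := hstep
    by_cases hR : ∃ q, q ∈ N.preT t ∧ q ∈ S ∧ q ∉ N.maxTrap S
    · obtain ⟨q, hq1, hq2, hq3⟩ := hR
      exact Or.inl (N.divert hfc hf.1 hq1 hq2 hq3 hQE)
    · push_neg at hR
      have hdisj : ∀ p ∈ N.preT t, p ∉ S := by
        intro p hp hpS
        have h1 := hf.1 p hp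
        have h2 := hQE p (hR p hp hpS)
        omega
      have hfrz := N.frozen hS hf hdisj
      have hQE' : ∀ p ∈ N.maxTrap S, c p = 0 := fun p hp => by
        rw [hfrz p (N.maxTrap_subset_s13 S hp)]; exact hQE p hp
      have hmueq : N.mu S c = N.mu S a := N.mu_congr S hfrz
      rcases ih hQE' with ⟨M₃, h1, h2, h3⟩ | ⟨h1, h2⟩
      · exact Or.inl ⟨M₃, Relation.ReflTransGen.head ⟨t, hf⟩ h1, h2, by omega⟩
      · exact Or.inr ⟨h1, fun p hp => by rw [h2 p hp, hfrz p hp]⟩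


end Net

/-- Commoner's theorem. -/
theorem commoner {P T : Type} [Fintype P] [Fintype T]
    (N : Net P T) (hfc : N.freeChoice)
    (hiso : ∀ p : P, ∃ t : T, p ∈ N.preT t ∨ p ∈ N.postT t)
    (M₀ : P → ℕ) :
    (∀ t : T, N.live t M₀) ↔
    (∀ S : Set P, S.Nonempty → N.isSiphon S →
      ∃ Q : Set P, Q ⊆ S ∧ N.isTrap Q ∧ ∃ p ∈ Q, 1 ≤ M₀ p) := by
  constructor
  · -- Necessity: liveness implies the siphon/trap property.
    intro hlive S hSne hS
    by_contra hcon
    push_neg at hcon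
    have hQE0 : ∀ p ∈ N.maxTrap S, M₀ p = 0 := by
      intro p hp
      have := hcon (N.maxTrap S) (N.maxTrap_subset_s13 S) (N.isTrap_maxTrap S) p hp
      omega
    have hcons : ∀ p, p ∈ S → p ∉ N.maxTrap S → ∃ u, N.Fpt p u := by
      intro p hpS hpQ
      by_contra h
      push_neg at h
      apply hpQ
      have htrap : N.isTrap (N.maxTrap S ∪ {p}) := by
        rintro u ⟨x, hx, hxu⟩
        rcases hx with hx | hx
        · obtain ⟨y, hy, hyu⟩ := N.isTrap_maxTrap S ⟨x, hx, hxu⟩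
          exact ⟨y, Or.inl hy, hyu⟩
        · exact absurd hxu (by cases hx; exact h u)
      have hsub : N.maxTrap S ∪ {p} ⊆ S := by
        rintro x (hx | hx)
        · exact N.maxTrap_subset_s13 S hx
        · cases hx; exact hpS
      exact N.subset_maxTrap_s13 htrap hsub (Or.inr rfl)
    have main : ∀ n, ∀ M, N.mu S M ≤ n → N.reach M₀ M → (∀ p ∈ N.maxTrap S, M p = 0) →
        ∃ Ms, N.reach M₀ Ms ∧ ∀ p ∈ S, Ms p = 0 := by
      intro n
      induction n with
      | zero =>
        intro M hmu hr hQE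
        refine ⟨M, hr, ?_⟩
        intro p hpS
        by_cases hmt : p ∈ N.maxTrap S
        · exact hQE p hmt
        · by_contra hne
          have h1 : 1 ≤ M p := by omega
          have := N.mu_pos S hpS hmt h1
          omega
      | succ n ih =>
        intro M hmu hr hQE
        by_cases hz : ∀ p ∈ S, M p = 0
        · exact ⟨M, hr, hz⟩
        · push_neg at hz
          obtain ⟨p, hpS, hpne⟩ := hz
          by_cases hmt : p ∈ N.maxTrap S
          · exact absurd (hQE p hmt) hpne
          obtain ⟨u, hu⟩ := hcons p hpS hmt
          have hnd := hlive u M hr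
          rw [Net.dead] at hnd
          push_neg at hnd
          obtain ⟨M'', hr'', hen⟩ := hnd
          rcases N.lemA hfc hS hr'' hQE with ⟨M₃, h1, h2, h3⟩ | ⟨h1, h2⟩
          · exact ih M₃ (by omega) (hr.trans h1) h2
          · obtain ⟨M₃, h1', h2', h3'⟩ := N.divert hfc hen hu hpS hmt h1
            have hmueq : N.mu S M'' = N.mu S M := N.mu_congr S h2
            exact ih M₃ (by omega) ((hr.trans hr'').trans h1') h2'
    obtain ⟨Ms, hrs, hzero⟩ := main (N.mu S M₀) M₀ le_rfl Relation.ReflTransGen.refl hQE0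
    obtain ⟨p₀, hp₀⟩ := hSne
    obtain ⟨t, ht⟩ := hiso p₀
    have hex : ∃ t₁ p₁, p₁ ∈ S ∧ p₁ ∈ N.preT t₁ := by
      rcases ht with h | h
      · exact ⟨t, p₀, hp₀, h⟩
      · obtain ⟨p₁, hp₁, hp₁t⟩ := hS ⟨p₀, hp₀, h⟩
        exact ⟨t, p₁, hp₁, hp₁t⟩
    obtain ⟨t₁, p₁, hp₁S, hp₁t⟩ := hex
    refine hlive t₁ Ms hrs ?_
    intro M' hr' hen
    have h1 := N.siphon_zero_mono hS hr' hzero p₁ hp₁S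
    have h2 := hen p₁ hp₁t
    omega
  · -- Sufficiency: the siphon/trap property implies liveness.
    intro hst t₀
    by_contra hnl
    rw [Net.live] at hnl
    push_neg at hnl
    obtain ⟨Md, hrMd, hdead0⟩ := hnl
    obtain ⟨M₁, hr1, hmax1⟩ := N.exists_reach_max (fun M' => {u | N.dead u M'}.ncard)
      (Fintype.card T)
      (fun M' => le_trans (Set.ncard_le_ncard (Set.subset_univ _) (Set.toFinite _))
        (by simp [Set.ncard_univ])) Md
    have hDstable : ∀ M', N.reach M₁ M' → ∀ u, N.dead u M' → N.dead u M₁ := by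
      intro M' hr' u hu
      have hsub : {u | N.dead u M₁} ⊆ {u | N.dead u M'} := fun v hv => N.dead_mono hr' hv
      have heq : {u | N.dead u M₁} = {u | N.dead u M'} :=
        Set.eq_of_subset_of_ncard_le hsub (hmax1 M' hr') (Set.toFinite _)
      have hmem : u ∈ {u | N.dead u M'} := hu
      rw [← heq] at hmem
      exact hmem
    have hstay : ∀ u, N.dead u M₁ → ∀ p ∈ N.preT u, ∀ M' M'', N.reach M₁ M' →
        N.reach M' M'' → 1 ≤ M' p → 1 ≤ M'' p := by
      intro u hdu p hp M' M'' h1 h2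
      induction h2 with
      | refl => exact id
      | tail hab hbc ih =>
        intro hm
        have hbm := ih hm
        obtain ⟨v, hv⟩ := hbc
        by_cases hpv : p ∈ N.preT v
        · exfalso
          have hpeq := hfc v u ⟨p, hpv, hp⟩
          exact hdu _ (h1.trans hab) (fun x hx => hv.1 x (by rw [hpeq]; exact hx))
        · rw [hv.2 p]
          by_cases hpo : p ∈ N.postT v <;> simp [hpv, hpo] <;> omega
    obtain ⟨M₂, hr2, hmax2⟩ := N.exists_reach_max
      (fun M' => {p | (∃ u, N.dead u M₁ ∧ p ∈ N.preT u) ∧ 1 ≤ M' p}.ncard)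
      (Fintype.card P)
      (fun M' => le_trans (Set.ncard_le_ncard (Set.subset_univ _) (Set.toFinite _))
        (by simp [Set.ncard_univ])) M₁
    have hAstable : ∀ M', N.reach M₂ M' → ∀ p, (∃ u, N.dead u M₁ ∧ p ∈ N.preT u) →
        1 ≤ M' p → 1 ≤ M₂ p := by
      intro M' hr' p hpd hm
      have hsub : {p | (∃ u, N.dead u M₁ ∧ p ∈ N.preT u) ∧ 1 ≤ M₂ p}
          ⊆ {p | (∃ u, N.dead u M₁ ∧ p ∈ N.preT u) ∧ 1 ≤ M' p} := by
        rintro x ⟨⟨w, hdw, hxw⟩, hxm⟩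
        exact ⟨⟨w, hdw, hxw⟩, hstay w hdw x hxw M₂ M' hr2 hr' hxm⟩
      have heq := Set.eq_of_subset_of_ncard_le hsub (hmax2 M' hr') (Set.toFinite _)
      have hmem : p ∈ {p | (∃ u, N.dead u M₁ ∧ p ∈ N.preT u) ∧ 1 ≤ M' p} := ⟨hpd, hm⟩
      rw [← heq] at hmem
      exact hmem.2
    have hd01 : N.dead t₀ M₁ := N.dead_mono hr1 hdead0
    have hd02 : N.dead t₀ M₂ := N.dead_mono hr2 hd01
    have hne2 := hd02 M₂ Relation.ReflTransGen.refl
    rw [Net.enabled] at hne2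
    push_neg at hne2
    obtain ⟨p₂, hp₂t, hp₂m⟩ := hne2
    have hS₂ne : ({p | (∃ u, N.dead u M₁ ∧ p ∈ N.preT u) ∧ M₂ p = 0} : Set P).Nonempty :=
      ⟨p₂, ⟨t₀, hd01, hp₂t⟩, by omega⟩
    have hsiph : N.isSiphon {p | (∃ u, N.dead u M₁ ∧ p ∈ N.preT u) ∧ M₂ p = 0} := by
      rintro t' ⟨p, hpS₂, hpt'⟩
      have hdt'2 : N.dead t' M₂ := by
        intro M₃ hr₃ hen
        have hf₄ : N.fires t' M₃ (N.fireM t' M₃) := N.fires_fireM hen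
        have hr₄ : N.reach M₂ (N.fireM t' M₃) := hr₃.trans (N.reach_single hf₄)
        have hpm : 1 ≤ N.fireM t' M₃ p := by
          have hpo : p ∈ N.postT t' := hpt'
          simp only [Net.fireM]
          by_cases hpr : p ∈ N.preT t'
          · have := hen p hpr
            simp only [hpr, hpo, if_pos]
            omega
          · simp [hpr, hpo]
        have := hAstable _ hr₄ p hpS₂.1 hpm
        have h0 := hpS₂.2
        omega
      have hdt'1 : N.dead t' M₁ := hDstable M₂ hr2 t' hdt'2
      have hne' := hdt'2 M₂ Relation.ReflTransGen.refl
      rw [Net.enabled] at hne'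
      push_neg at hne'
      obtain ⟨p', hp't, hp'm⟩ := hne'
      exact ⟨p', ⟨⟨t', hdt'1, hp't⟩, by omega⟩, hp't⟩
    obtain ⟨Q, hQS, hQt, hQm⟩ := hst _ hS₂ne hsiph
    obtain ⟨pq, hpqQ, hpqm⟩ := N.trap_marked_mono hQt ((hrMd.trans hr1).trans hr2) hQm
    have := (hQS hpqQ).2
    omega
end
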